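/- arXiv:2601.21705 — 2 statements merged into one kernel-verified Lean document; each statement's English description precedes it below -/
import Mathlib

section
/- One has δ'(x) > δ'(b*_{r+q}) for all x > b*_{r+q}, and moreover δ(y_u)/δ'(y_u) < μ/r < δ(y_u)/δ'(b*_{r+q}). -/
/-!
Write `γ₁ > 0 > γ₂` for the roots of `σ²γ²/2 + μγ − ρ = 0` at `ρ = r + q`, so that `δ` solves
`σ²δ''/2 + μδ' = ρδ`. The boundary `b*` is exactly where `γ₁²e^{γ₁b*} = γ₂²e^{γ₂b*}`, i.e. where
`δ''` vanishes, and `δ'' > 0` beyond it; hence `δ` is strictly convex on `[b*, ∞)` and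
`δ(b*) = (μ/ρ) δ'(b*)`. Since `y_u − b* = μ/r − μ/ρ > 0`, comparing the secant slope of `δ` on
`[b*, y_u]` with `δ'(b*)` and `δ'(y_u)` gives both bounds.
-/

open Real Set Filter

noncomputable def gam1 (μ σ ρ : ℝ) : ℝ := Real.sqrt (μ^2/σ^4 + 2*ρ/σ^2) - μ/σ^2

noncomputable def gam2 (μ σ ρ : ℝ) : ℝ := -Real.sqrt (μ^2/σ^4 + 2*ρ/σ^2) - μ/σ^2

/-- The classical optimal dividend boundary `b*_ρ`. -/
noncomputable def bstar (μ σ ρ : ℝ) : ℝ :=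
  Real.log ((gam2 μ σ ρ)^2 / (gam1 μ σ ρ)^2) / (gam1 μ σ ρ - gam2 μ σ ρ)

/-- The classical value function `V_ρ`. -/
noncomputable def Vfun (μ σ ρ x : ℝ) : ℝ :=
  if x < bstar μ σ ρ then
    (Real.exp (gam1 μ σ ρ * x) - Real.exp (gam2 μ σ ρ * x)) /
      (gam1 μ σ ρ * Real.exp (gam1 μ σ ρ * bstar μ σ ρ) -
        gam2 μ σ ρ * Real.exp (gam2 μ σ ρ * bstar μ σ ρ))
  else
    (Real.exp (gam1 μ σ ρ * bstar μ σ ρ) - Real.exp (gam2 μ σ ρ * bstar μ σ ρ)) /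
      (gam1 μ σ ρ * Real.exp (gam1 μ σ ρ * bstar μ σ ρ) -
        gam2 μ σ ρ * Real.exp (gam2 μ σ ρ * bstar μ σ ρ)) + x - bstar μ σ ρ

/-- `δ(y) = e^{γ₁(r+q)y} − e^{γ₂(r+q)y}`. -/
noncomputable def del (μ σ r q y : ℝ) : ℝ :=
  Real.exp (gam1 μ σ (r+q) * y) - Real.exp (gam2 μ σ (r+q) * y)

/-- `δ'(y)`. -/
noncomputable def delP (μ σ r q y : ℝ) : ℝ :=
  gam1 μ σ (r+q) * Real.exp (gam1 μ σ (r+q) * y) -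
    gam2 μ σ (r+q) * Real.exp (gam2 μ σ (r+q) * y)

/-- `δ''(y)`. -/
noncomputable def delPP (μ σ r q y : ℝ) : ℝ :=
  (gam1 μ σ (r+q))^2 * Real.exp (gam1 μ σ (r+q) * y) -
    (gam2 μ σ (r+q))^2 * Real.exp (gam2 μ σ (r+q) * y)

/-- `y_u := b*_{r+q} + μ/r − μ/(r+q)`. -/
noncomputable def yUpper (μ σ r q : ℝ) : ℝ := bstar μ σ (r+q) + μ/r - μ/(r+q)

/-- `Δ(y)`. -/
noncomputable def DeltaF (μ σ r q y : ℝ) : ℝ :=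
  (1/(gam1 μ σ r - gam2 μ σ r)) *
    Real.log ((gam2 μ σ r)^2 * (delP μ σ r q y - gam1 μ σ r * del μ σ r q y) /
      ((gam1 μ σ r)^2 * (delP μ σ r q y - gam2 μ σ r * del μ σ r q y)))

/-- `b*(y) = y + Δ(y)`. -/
noncomputable def bstarY (μ σ r q y : ℝ) : ℝ := y + DeltaF μ σ r q y

noncomputable def psiF (μ σ ρ x : ℝ) : ℝ := Real.exp (gam1 μ σ ρ * x)
noncomputable def phiF (μ σ ρ x : ℝ) : ℝ := Real.exp (gam2 μ σ ρ * x)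
noncomputable def psiP (μ σ ρ x : ℝ) : ℝ := gam1 μ σ ρ * Real.exp (gam1 μ σ ρ * x)
noncomputable def phiP (μ σ ρ x : ℝ) : ℝ := gam2 μ σ ρ * Real.exp (gam2 μ σ ρ * x)

/-- `η(y;b) = ψ'_r(b)φ_r(y) − φ'_r(b)ψ_r(y)`. -/
noncomputable def etaF (μ σ r y b : ℝ) : ℝ :=
  psiP μ σ r b * phiF μ σ r y - phiP μ σ r b * psiF μ σ r y

/-- `η'(y;b)` (derivative in `y`). -/
noncomputable def etaP (μ σ r y b : ℝ) : ℝ :=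
  psiP μ σ r b * phiP μ σ r y - phiP μ σ r b * psiP μ σ r y

/-- `K₁(y)`. -/
noncomputable def K1 (μ σ r q y : ℝ) : ℝ :=
  (psiF μ σ r y * etaP μ σ r y (bstarY μ σ r q y) -
    psiP μ σ r y * etaF μ σ r y (bstarY μ σ r q y)) /
  (psiP μ σ r (bstarY μ σ r q y) *
    (del μ σ r q y * etaP μ σ r y (bstarY μ σ r q y) -
      delP μ σ r q y * etaF μ σ r y (bstarY μ σ r q y)))

/-- `K₂(y) = −K₁(y)`. -/
noncomputable def K2 (μ σ r q y : ℝ) : ℝ := -K1 μ σ r q y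

/-- `K₃(y)`. -/
noncomputable def K3 (μ σ r q y : ℝ) : ℝ :=
  (phiP μ σ r (bstarY μ σ r q y) *
      (del μ σ r q y * psiP μ σ r y - delP μ σ r q y * psiF μ σ r y) +
    del μ σ r q y * etaP μ σ r y (bstarY μ σ r q y) -
      delP μ σ r q y * etaF μ σ r y (bstarY μ σ r q y)) /
  (psiP μ σ r (bstarY μ σ r q y) *
    (del μ σ r q y * etaP μ σ r y (bstarY μ σ r q y) -
      delP μ σ r q y * etaF μ σ r y (bstarY μ σ r q y)))

/-- `K₄(y)`. -/
noncomputable def K4 (μ σ r q y : ℝ) : ℝ :=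
  (psiF μ σ r y * delP μ σ r q y - psiP μ σ r y * del μ σ r q y) /
  (del μ σ r q y * etaP μ σ r y (bstarY μ σ r q y) -
    delP μ σ r q y * etaF μ σ r y (bstarY μ σ r q y))

/-- The candidate value function `w(·;y)` in the subcritical regime. -/
noncomputable def wfun (μ σ r q y x : ℝ) : ℝ :=
  if x < y then
    K1 μ σ r q y * Real.exp (gam1 μ σ (r+q) * x) + K2 μ σ r q y * Real.exp (gam2 μ σ (r+q) * x)
  else if x < bstarY μ σ r q y then
    K3 μ σ r q y * Real.exp (gam1 μ σ r * x) + K4 μ σ r q y * Real.exp (gam2 μ σ r * x)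
  else
    K3 μ σ r q y * Real.exp (gam1 μ σ r * bstarY μ σ r q y) +
      K4 μ σ r q y * Real.exp (gam2 μ σ r * bstarY μ σ r q y) + x - bstarY μ σ r q y

/-- The function `f` characterising the critical level `y_l`. -/
noncomputable def fF (μ σ r q y : ℝ) : ℝ :=
  (-(gam1 μ σ r / gam2 μ σ r) * delP μ σ r q y + gam1 μ σ r * del μ σ r q y) *
    ((gam2 μ σ r)^2/(gam1 μ σ r)^2 *
      ((delP μ σ r q y - gam1 μ σ r * del μ σ r q y) /
        (delP μ σ r q y - gam2 μ σ r * del μ σ r q y)))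
      ^ (gam1 μ σ r / (gam1 μ σ r - gam2 μ σ r))
  - delP μ σ r q (bstar μ σ (r+q))

noncomputable def e1F (μ σ r q b : ℝ) : ℝ :=
  (phiF μ σ (r+q) b - phiP μ σ (r+q) b * Vfun μ σ (r+q) b) /
  (psiP μ σ (r+q) b * phiF μ σ (r+q) b - psiF μ σ (r+q) b * phiP μ σ (r+q) b)

noncomputable def e2F (μ σ r q b : ℝ) : ℝ :=
  (psiP μ σ (r+q) b * Vfun μ σ (r+q) b - psiF μ σ (r+q) b) /
  (psiP μ σ (r+q) b * phiF μ σ (r+q) b - psiF μ σ (r+q) b * phiP μ σ (r+q) b)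

noncomputable def e3F (μ σ r q b y : ℝ) : ℝ :=
  (e1F μ σ r q b * (phiF μ σ r y * psiP μ σ (r+q) y - phiP μ σ r y * psiF μ σ (r+q) y) +
    e2F μ σ r q b * (phiF μ σ r y * phiP μ σ (r+q) y - phiP μ σ r y * phiF μ σ (r+q) y)) /
  (psiP μ σ r y * phiF μ σ r y - psiF μ σ r y * phiP μ σ r y)

noncomputable def e4F (μ σ r q b y : ℝ) : ℝ :=
  (e1F μ σ r q b * (psiP μ σ r y * psiF μ σ (r+q) y - psiF μ σ r y * psiP μ σ (r+q) y) +
    e2F μ σ r q b * (psiP μ σ r y * phiF μ σ (r+q) y - psiF μ σ r y * phiP μ σ (r+q) y)) /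
  (psiP μ σ r y * phiF μ σ r y - psiF μ σ r y * phiP μ σ r y)

/-- The function `H(b,y)` from the critical regime. -/
noncomputable def Hfun (μ σ r q b y : ℝ) : ℝ :=
  (gam1 μ σ r - gam2 μ σ r) *
    (-gam2 μ σ r / gam1 μ σ r) ^ ((gam1 μ σ r + gam2 μ σ r)/(gam1 μ σ r - gam2 μ σ r)) *
    (e3F μ σ r q b y) ^ (-gam2 μ σ r/(gam1 μ σ r - gam2 μ σ r)) *
    (-e4F μ σ r q b y) ^ (gam1 μ σ r/(gam1 μ σ r - gam2 μ σ r))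

/-- `Λ(b,y) = −e₄(b,y)/e₃(b,y)`. -/
noncomputable def Lamfun (μ σ r q b y : ℝ) : ℝ := -e4F μ σ r q b y / e3F μ σ r q b y

/-- `L(y)`. -/
noncomputable def Lfun (μ σ r q y : ℝ) : ℝ :=
  (1/(gam1 μ σ r - gam2 μ σ r)) *
    Real.log ((gam2 μ σ r)^2/(gam1 μ σ r)^2 * Lamfun μ σ r q y y) - y

section Roots

variable {μ σ ρ : ℝ}

lemma sqrt_discr_sq (hσ : σ ≠ 0) (hρ : 0 ≤ ρ) :
    √(μ^2/σ^4 + 2*ρ/σ^2) ^ 2 = μ^2/σ^4 + 2*ρ/σ^2 :=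
  sq_sqrt (by positivity)

lemma gam1_quadratic (hσ : σ ≠ 0) (hρ : 0 ≤ ρ) :
    σ^2/2 * gam1 μ σ ρ ^ 2 + μ * gam1 μ σ ρ - ρ = 0 := by
  have hs := sqrt_discr_sq (μ := μ) hσ hρ
  unfold gam1
  field_simp
  field_simp at hs
  linear_combination hs

lemma gam2_quadratic (hσ : σ ≠ 0) (hρ : 0 ≤ ρ) :
    σ^2/2 * gam2 μ σ ρ ^ 2 + μ * gam2 μ σ ρ - ρ = 0 := by
  have hs := sqrt_discr_sq (μ := μ) hσ hρ
  unfold gam2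
  field_simp
  field_simp at hs
  linear_combination hs

lemma gam1_mul_gam2 (hσ : σ ≠ 0) (hρ : 0 ≤ ρ) : gam1 μ σ ρ * gam2 μ σ ρ = -(2*ρ/σ^2) := by
  have hs := sqrt_discr_sq (μ := μ) hσ hρ
  unfold gam1 gam2
  field_simp
  field_simp at hs
  linear_combination -hs

lemma gam2_le_gam1 : gam2 μ σ ρ ≤ gam1 μ σ ρ := by
  unfold gam1 gam2
  linarith [sqrt_nonneg (μ^2/σ^4 + 2*ρ/σ^2)]

lemma gam2_neg_and_gam1_pos (hσ : σ ≠ 0) (hρ : 0 < ρ) : gam2 μ σ ρ < 0 ∧ 0 < gam1 μ σ ρ := by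
  have hprod : gam1 μ σ ρ * gam2 μ σ ρ < 0 := by
    rw [gam1_mul_gam2 hσ hρ.le, neg_lt_zero]
    exact div_pos (by linarith) (sq_pos_of_ne_zero hσ)
  have hle := gam2_le_gam1 (μ := μ) (σ := σ) (ρ := ρ)
  constructor <;> nlinarith

lemma exp_sub_mul_bstar (hσ : σ ≠ 0) (hρ : 0 < ρ) :
    exp ((gam1 μ σ ρ - gam2 μ σ ρ) * bstar μ σ ρ) = gam2 μ σ ρ ^ 2 / gam1 μ σ ρ ^ 2 := by
  obtain ⟨h2, h1⟩ := gam2_neg_and_gam1_pos (μ := μ) hσ hρ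
  unfold bstar
  rw [mul_div_cancel₀ _ (by linarith), exp_log (div_pos (sq_pos_of_ne_zero h2.ne) (by positivity))]

end Roots

lemma hasDerivAt_exp_const_mul (a y : ℝ) :
    HasDerivAt (fun y => exp (a * y)) (a * exp (a * y)) y := by
  simpa [mul_comm] using ((hasDerivAt_id y).const_mul a).exp

section Delta

variable {μ σ r q : ℝ}

lemma hasDerivAt_del (y : ℝ) : HasDerivAt (del μ σ r q) (delP μ σ r q y) y :=
  (hasDerivAt_exp_const_mul _ y).sub (hasDerivAt_exp_const_mul _ y)

lemma hasDerivAt_delP (y : ℝ) : HasDerivAt (delP μ σ r q) (delPP μ σ r q y) y := by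
  refine (((hasDerivAt_exp_const_mul (gam1 μ σ (r+q)) y).const_mul (gam1 μ σ (r+q))).sub
    ((hasDerivAt_exp_const_mul (gam2 μ σ (r+q)) y).const_mul (gam2 μ σ (r+q)))).congr_deriv ?_
  unfold delPP; ring

lemma delP_pos (hσ : σ ≠ 0) (hρ : 0 < r + q) (y : ℝ) : 0 < delP μ σ r q y := by
  obtain ⟨h2, h1⟩ := gam2_neg_and_gam1_pos (μ := μ) hσ hρ
  unfold delP
  nlinarith [exp_pos (gam1 μ σ (r+q) * y), exp_pos (gam2 μ σ (r+q) * y)]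

lemma delPP_eq (hσ : σ ≠ 0) (hρ : 0 < r + q) (y : ℝ) :
    delPP μ σ r q y = gam1 μ σ (r+q) ^ 2 * exp (gam2 μ σ (r+q) * y) *
      (exp ((gam1 μ σ (r+q) - gam2 μ σ (r+q)) * y) -
        exp ((gam1 μ σ (r+q) - gam2 μ σ (r+q)) * bstar μ σ (r+q))) := by
  have h1 := (gam2_neg_and_gam1_pos (μ := μ) hσ hρ).2
  have hexp : exp (gam2 μ σ (r+q) * y) * exp ((gam1 μ σ (r+q) - gam2 μ σ (r+q)) * y) =
      exp (gam1 μ σ (r+q) * y) := by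
    rw [← exp_add]; ring_nf
  rw [exp_sub_mul_bstar hσ hρ]
  unfold delPP
  have hcancel : gam1 μ σ (r+q) ^ 2 * (gam2 μ σ (r+q) ^ 2 / gam1 μ σ (r+q) ^ 2) =
      gam2 μ σ (r+q) ^ 2 :=
    mul_div_cancel₀ _ (by positivity)
  linear_combination -(gam1 μ σ (r+q) ^ 2 * hexp) + exp (gam2 μ σ (r+q) * y) * hcancel

lemma delPP_bstar (hσ : σ ≠ 0) (hρ : 0 < r + q) : delPP μ σ r q (bstar μ σ (r+q)) = 0 := by
  rw [delPP_eq hσ hρ, sub_self, mul_zero]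

lemma delPP_pos (hσ : σ ≠ 0) (hρ : 0 < r + q) {y : ℝ} (hy : bstar μ σ (r+q) < y) :
    0 < delPP μ σ r q y := by
  obtain ⟨h2, h1⟩ := gam2_neg_and_gam1_pos (μ := μ) hσ hρ
  rw [delPP_eq hσ hρ]
  have : exp ((gam1 μ σ (r+q) - gam2 μ σ (r+q)) * bstar μ σ (r+q)) <
      exp ((gam1 μ σ (r+q) - gam2 μ σ (r+q)) * y) :=
    exp_lt_exp.2 (mul_lt_mul_of_pos_left hy (by linarith))
  have := sub_pos.2 this
  positivity

lemma del_ode (hσ : σ ≠ 0) (hρ : 0 ≤ r + q) (y : ℝ) :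
    σ^2/2 * delPP μ σ r q y + μ * delP μ σ r q y = (r + q) * del μ σ r q y := by
  unfold del delP delPP
  linear_combination exp (gam1 μ σ (r+q) * y) * gam1_quadratic (μ := μ) hσ hρ -
    exp (gam2 μ σ (r+q) * y) * gam2_quadratic (μ := μ) hσ hρ

lemma del_bstar (hσ : σ ≠ 0) (hρ : 0 < r + q) :
    del μ σ r q (bstar μ σ (r+q)) = μ/(r+q) * delP μ σ r q (bstar μ σ (r+q)) := by
  rw [div_mul_eq_mul_div, eq_div_iff hρ.ne', mul_comm, ← del_ode hσ hρ.le, delPP_bstar hσ hρ,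
    mul_zero, zero_add]

lemma strictMonoOn_delP (hσ : σ ≠ 0) (hρ : 0 < r + q) :
    StrictMonoOn (delP μ σ r q) (Ici (bstar μ σ (r+q))) :=
  strictMonoOn_of_deriv_pos (convex_Ici _)
    (fun y _ => (hasDerivAt_delP y).continuousAt.continuousWithinAt)
    (fun y hy => by
      rw [interior_Ici] at hy
      rw [(hasDerivAt_delP y).deriv]
      exact delPP_pos hσ hρ hy)

lemma strictConvexOn_del (hσ : σ ≠ 0) (hρ : 0 < r + q) :
    StrictConvexOn ℝ (Ici (bstar μ σ (r+q))) (del μ σ r q) := by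
  have hderiv : deriv (del μ σ r q) = delP μ σ r q := funext fun y => (hasDerivAt_del y).deriv
  refine StrictMonoOn.strictConvexOn_of_deriv (convex_Ici _)
    (fun y _ => (hasDerivAt_del y).continuousAt.continuousWithinAt) ?_
  rw [hderiv]
  exact (strictMonoOn_delP hσ hρ).mono interior_subset

end Delta

/-- `δ'(x) > δ'(b*_{r+q})` for all `x > b*_{r+q}`, and
`δ(y_u)/δ'(y_u) < μ/r < δ(y_u)/δ'(b*_{r+q})`. -/
theorem stmt13 (μ σ r q : ℝ) (hμ : 0 < μ) (hσ : 0 < σ) (hr : 0 < r) (hq : 0 < q) :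
    (∀ x, bstar μ σ (r+q) < x → delP μ σ r q (bstar μ σ (r+q)) < delP μ σ r q x) ∧
    del μ σ r q (yUpper μ σ r q) / delP μ σ r q (yUpper μ σ r q) < μ/r ∧
    μ/r < del μ σ r q (yUpper μ σ r q) / delP μ σ r q (bstar μ σ (r+q)) := by
  have hρ : 0 < r + q := by positivity
  set b := bstar μ σ (r+q)
  set y := yUpper μ σ r q
  have hgap : y - b = μ/r - μ/(r+q) := by simp only [y, yUpper]; ring
  have hby : b < y := by
    have : μ/(r+q) < μ/r := div_lt_div_of_pos_left hμ hr (by linarith)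
    linarith
  have hmono : StrictMonoOn (delP μ σ r q) (Ici b) := strictMonoOn_delP hσ.ne' hρ
  have hconv : StrictConvexOn ℝ (Ici b) (del μ σ r q) := strictConvexOn_del hσ.ne' hρ
  have hlower := hconv.lt_slope_of_hasDerivAt self_mem_Ici hby.le hby (hasDerivAt_del b)
  have hupper := hconv.slope_lt_of_hasDerivAt self_mem_Ici hby.le hby (hasDerivAt_del y)
  rw [slope_def_field, lt_div_iff₀ (sub_pos.2 hby)] at hlower
  rw [slope_def_field, div_lt_iff₀ (sub_pos.2 hby)] at hupper
  have hdel_b : del μ σ r q b = μ/(r+q) * delP μ σ r q b := del_bstar hσ.ne' hρ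
  refine ⟨fun x hx => hmono self_mem_Ici hx.le hx, ?_, ?_⟩
  · have hb_lt_y := hmono self_mem_Ici hby.le hby
    rw [div_lt_iff₀ (delP_pos hσ.ne' hρ y)]
    calc del μ σ r q y < del μ σ r q b + delP μ σ r q y * (y - b) := by linarith
      _ = μ/(r+q) * delP μ σ r q b + delP μ σ r q y * (y - b) := by rw [hdel_b]
      _ < μ/(r+q) * delP μ σ r q y + delP μ σ r q y * (y - b) := by gcongr
      _ = μ/r * delP μ σ r q y := by rw [hgap]; ring
  · rw [lt_div_iff₀ (delP_pos hσ.ne' hρ b)]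
    calc μ/r * delP μ σ r q b = del μ σ r q b + delP μ σ r q b * (y - b) := by
          rw [hdel_b, hgap]; ring
      _ < del μ σ r q y := by linarith
end

section
/- For all y ∈ [y_l, y_u] and all b ∈ [b*_{r+q}, y] one has e₃(b, y) > 0 and e₄(b, y) < 0. -/
/-! For `b ≥ b*_{r+q}` the value function is linear,
`V_{r+q}(b) = μ/(r+q) + b - b*_{r+q}`, so `0 < V_{r+q}(b) ≤ μ/r` as soon as `b ≤ y_u`.
Let `G = e₁ ψ_{r+q} + e₂ φ_{r+q}` (`extF`, with derivative `extP`) be the `(r+q)`-solution with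
`G(b) = V_{r+q}(b)` and `G'(b) = 1`; then `e₃ ψ_r + e₄ φ_r` is the `r`-solution matching `G` to
first order at `y`, i.e. `e₃ = φ_r(y) (G' - γ₂(r) G)(y) / W` and
`e₄ = -ψ_r(y) (G' - γ₁(r) G)(y) / W` with a positive Wronskian `W`. So it suffices that
`G(y) > 0` and `(G' - γ₁(r) G)(y) > 0`. Both functions have the form
`A e^{γ₁(r+q) x} + C e^{γ₂(r+q) x}` with `A > 0` (since `e₁ > 0` and `γ₁(r+q) > γ₁(r)`), and
such a function stays positive to the right of any point where it is positive. At `x = b` they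
equal `V_{r+q}(b) > 0` and `1 - γ₁(r) V_{r+q}(b) ≥ 1 - γ₁(r) μ/r > 0`. -/

open Real Set Filter

section Exponents

variable {μ σ ρ : ℝ}

lemma quadratic_eq_of_sq_eq_disc {s : ℝ} (hσ : σ ≠ 0)
    (hs : s ^ 2 = μ ^ 2 / σ ^ 4 + 2 * ρ / σ ^ 2) :
    σ ^ 2 / 2 * (s - μ / σ ^ 2) ^ 2 + μ * (s - μ / σ ^ 2) = ρ := by
  have hs' : s ^ 2 * σ ^ 4 = μ ^ 2 + 2 * ρ * σ ^ 2 := by rw [hs]; field_simp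
  field_simp
  linear_combination hs'

lemma gam1_quadratic_eq (hσ : σ ≠ 0) (hρ : 0 ≤ ρ) :
    σ ^ 2 / 2 * gam1 μ σ ρ ^ 2 + μ * gam1 μ σ ρ = ρ :=
  quadratic_eq_of_sq_eq_disc hσ (Real.sq_sqrt (by positivity))

lemma gam2_quadratic_eq (hσ : σ ≠ 0) (hρ : 0 ≤ ρ) :
    σ ^ 2 / 2 * gam2 μ σ ρ ^ 2 + μ * gam2 μ σ ρ = ρ :=
  quadratic_eq_of_sq_eq_disc hσ (by rw [neg_sq, Real.sq_sqrt (by positivity)])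

lemma abs_drift_lt_sqrt_disc (hσ : σ ≠ 0) (hρ : 0 < ρ) :
    |μ / σ ^ 2| < Real.sqrt (μ ^ 2 / σ ^ 4 + 2 * ρ / σ ^ 2) := by
  rw [← Real.sqrt_sq_eq_abs]
  apply Real.sqrt_lt_sqrt (sq_nonneg _)
  have : 0 < 2 * ρ / σ ^ 2 := by positivity
  rw [div_pow, ← pow_mul]
  linarith

lemma gam1_pos (hσ : σ ≠ 0) (hρ : 0 < ρ) : 0 < gam1 μ σ ρ := by
  have := abs_drift_lt_sqrt_disc (μ := μ) hσ hρ
  unfold gam1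
  linarith [le_abs_self (μ / σ ^ 2)]

lemma gam2_neg (hσ : σ ≠ 0) (hρ : 0 < ρ) : gam2 μ σ ρ < 0 := by
  have := abs_drift_lt_sqrt_disc (μ := μ) hσ hρ
  unfold gam2
  linarith [neg_abs_le (μ / σ ^ 2)]

lemma gam2_lt_gam1 (hσ : σ ≠ 0) (hρ : 0 < ρ) : gam2 μ σ ρ < gam1 μ σ ρ :=
  (gam2_neg hσ hρ).trans (gam1_pos hσ hρ)

lemma gam1_lt_gam1 {ρ' : ℝ} (hσ : σ ≠ 0) (hρ : 0 ≤ ρ) (hρρ' : ρ < ρ') :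
    gam1 μ σ ρ < gam1 μ σ ρ' := by
  unfold gam1
  gcongr

lemma mul_gam1_lt (hσ : σ ≠ 0) (hρ : 0 < ρ) : μ * gam1 μ σ ρ < ρ := by
  have := gam1_quadratic_eq (μ := μ) hσ hρ.le
  have : 0 < σ ^ 2 / 2 * gam1 μ σ ρ ^ 2 := by have := gam1_pos (μ := μ) hσ hρ; positivity
  linarith

lemma wronskian_pos (hσ : σ ≠ 0) (hρ : 0 < ρ) (x : ℝ) :
    0 < psiP μ σ ρ x * phiF μ σ ρ x - psiF μ σ ρ x * phiP μ σ ρ x := by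
  have h : psiP μ σ ρ x * phiF μ σ ρ x - psiF μ σ ρ x * phiP μ σ ρ x =
      (gam1 μ σ ρ - gam2 μ σ ρ) * (Real.exp (gam1 μ σ ρ * x) * Real.exp (gam2 μ σ ρ * x)) := by
    unfold psiP phiF psiF phiP; ring
  rw [h]
  exact mul_pos (sub_pos.mpr (gam2_lt_gam1 hσ hρ)) (by positivity)

end Exponents

section ValueFunction

variable {μ σ ρ : ℝ}

/-- Smooth fit at the barrier: `V_ρ'' (b*_ρ) = 0`. -/
lemma gam1_sq_mul_exp_bstar (hσ : σ ≠ 0) (hρ : 0 < ρ) :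
    gam1 μ σ ρ ^ 2 * Real.exp (gam1 μ σ ρ * bstar μ σ ρ) =
      gam2 μ σ ρ ^ 2 * Real.exp (gam2 μ σ ρ * bstar μ σ ρ) := by
  have h1 := gam1_pos (μ := μ) hσ hρ
  have h2 := gam2_neg (μ := μ) hσ hρ
  have hexp : Real.exp ((gam1 μ σ ρ - gam2 μ σ ρ) * bstar μ σ ρ) =
      gam2 μ σ ρ ^ 2 / gam1 μ σ ρ ^ 2 := by
    rw [bstar, mul_div_cancel₀ _ (by linarith),
      Real.exp_log (div_pos (by nlinarith) (by positivity))]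
  have hsplit : Real.exp (gam1 μ σ ρ * bstar μ σ ρ) =
      Real.exp (gam2 μ σ ρ * bstar μ σ ρ) * (gam2 μ σ ρ ^ 2 / gam1 μ σ ρ ^ 2) := by
    rw [← hexp, ← Real.exp_add]; ring_nf
  rw [hsplit]
  field_simp

lemma Vfun_of_bstar_le {x : ℝ} (hσ : σ ≠ 0) (hρ : 0 < ρ) (hx : bstar μ σ ρ ≤ x) :
    Vfun μ σ ρ x = μ / ρ + x - bstar μ σ ρ := by
  have h1 := gam1_pos (μ := μ) hσ hρ
  have h2 := gam2_neg (μ := μ) hσ hρ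
  have hq1 := gam1_quadratic_eq (μ := μ) hσ hρ.le
  have hq2 := gam2_quadratic_eq (μ := μ) hσ hρ.le
  have hfit := gam1_sq_mul_exp_bstar (μ := μ) hσ hρ
  rw [Vfun, if_neg (not_lt.mpr hx)]
  set g1 := gam1 μ σ ρ
  set g2 := gam2 μ σ ρ
  set B := bstar μ σ ρ
  have hden : 0 < g1 * Real.exp (g1 * B) - g2 * Real.exp (g2 * B) := by
    have := mul_pos h1 (Real.exp_pos (g1 * B))
    nlinarith [Real.exp_pos (g2 * B)]
  congr 2
  rw [div_eq_div_iff hden.ne' hρ.ne']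
  linear_combination
    Real.exp (g2 * B) * hq2 - Real.exp (g1 * B) * hq1 + σ ^ 2 / 2 * hfit

end ValueFunction

lemma exp_combination_pos_of_le {Γ₁ Γ₂ A C b y : ℝ} (hΓ : Γ₂ ≤ Γ₁) (hA : 0 < A) (hby : b ≤ y)
    (hb : 0 < A * Real.exp (Γ₁ * b) + C * Real.exp (Γ₂ * b)) :
    0 < A * Real.exp (Γ₁ * y) + C * Real.exp (Γ₂ * y) :=
  calc 0 < Real.exp (Γ₂ * (y - b)) * (A * Real.exp (Γ₁ * b) + C * Real.exp (Γ₂ * b)) := by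
        positivity
    _ = A * Real.exp (Γ₁ * y - (Γ₁ - Γ₂) * (y - b)) + C * Real.exp (Γ₂ * y) := by
        rw [mul_add, ← mul_assoc, mul_comm _ A, mul_assoc, ← Real.exp_add, mul_left_comm,
          ← Real.exp_add]
        ring_nf
    _ ≤ A * Real.exp (Γ₁ * y) + C * Real.exp (Γ₂ * y) := by
        gcongr
        nlinarith

section Continuation

variable {μ σ r q : ℝ}

noncomputable def extF (μ σ r q b x : ℝ) : ℝ :=
  e1F μ σ r q b * psiF μ σ (r+q) x + e2F μ σ r q b * phiF μ σ (r+q) x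

noncomputable def extP (μ σ r q b x : ℝ) : ℝ :=
  e1F μ σ r q b * psiP μ σ (r+q) x + e2F μ σ r q b * phiP μ σ (r+q) x

lemma extF_self (hσ : σ ≠ 0) (hrq : 0 < r + q) (b : ℝ) :
    extF μ σ r q b b = Vfun μ σ (r+q) b := by
  have hW := (wronskian_pos (μ := μ) hσ hrq b).ne'
  rw [extF, e1F, e2F, div_mul_eq_mul_div, div_mul_eq_mul_div, ← add_div, div_eq_iff hW]
  ring

lemma extP_self (hσ : σ ≠ 0) (hrq : 0 < r + q) (b : ℝ) : extP μ σ r q b b = 1 := by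
  have hW := (wronskian_pos (μ := μ) hσ hrq b).ne'
  rw [extP, e1F, e2F, div_mul_eq_mul_div, div_mul_eq_mul_div, ← add_div, div_eq_iff hW]
  ring

lemma e1F_pos {b : ℝ} (hσ : σ ≠ 0) (hrq : 0 < r + q) (hV : 0 < Vfun μ σ (r+q) b) :
    0 < e1F μ σ r q b := by
  have := gam2_neg (μ := μ) hσ hrq
  refine div_pos ?_ (wronskian_pos hσ hrq b)
  have : phiF μ σ (r+q) b - phiP μ σ (r+q) b * Vfun μ σ (r+q) b =
      Real.exp (gam2 μ σ (r+q) * b) * (1 - gam2 μ σ (r+q) * Vfun μ σ (r+q) b) := by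
    rw [phiF, phiP]; ring
  rw [this]
  exact mul_pos (Real.exp_pos _) (by nlinarith)

lemma e3F_eq (b y : ℝ) : e3F μ σ r q b y =
    phiF μ σ r y * (extP μ σ r q b y - gam2 μ σ r * extF μ σ r q b y) /
      (psiP μ σ r y * phiF μ σ r y - psiF μ σ r y * phiP μ σ r y) := by
  simp only [e3F, extP, extF, psiF, phiF, psiP, phiP]
  ring

lemma e4F_eq (b y : ℝ) : e4F μ σ r q b y =
    -(psiF μ σ r y * (extP μ σ r q b y - gam1 μ σ r * extF μ σ r q b y)) /
      (psiP μ σ r y * phiF μ σ r y - psiF μ σ r y * phiP μ σ r y) := by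
  simp only [e4F, extP, extF, psiF, phiF, psiP, phiP]
  ring

lemma extF_pos {b y : ℝ} (hσ : σ ≠ 0) (hrq : 0 < r + q) (hV : 0 < Vfun μ σ (r+q) b)
    (hby : b ≤ y) : 0 < extF μ σ r q b y := by
  have hΓ := (gam2_lt_gam1 (μ := μ) hσ hrq).le
  have hb : 0 < extF μ σ r q b b := by rwa [extF_self hσ hrq]
  exact exp_combination_pos_of_le hΓ (e1F_pos hσ hrq hV) hby hb

lemma gam1_mul_extF_lt_extP {b y : ℝ} (hσ : σ ≠ 0) (hr : 0 < r) (hq : 0 < q)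
    (hV : 0 < Vfun μ σ (r+q) b) (hγV : gam1 μ σ r * Vfun μ σ (r+q) b < 1) (hby : b ≤ y) :
    gam1 μ σ r * extF μ σ r q b y < extP μ σ r q b y := by
  have hrq : 0 < r + q := by linarith
  have hsplit : ∀ x, extP μ σ r q b x - gam1 μ σ r * extF μ σ r q b x =
      e1F μ σ r q b * (gam1 μ σ (r+q) - gam1 μ σ r) * Real.exp (gam1 μ σ (r+q) * x) +
        e2F μ σ r q b * (gam2 μ σ (r+q) - gam1 μ σ r) * Real.exp (gam2 μ σ (r+q) * x) := by
    intro x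
    simp only [extP, extF, psiF, phiF, psiP, phiP]
    ring
  have hΓ := (gam2_lt_gam1 (μ := μ) hσ hrq).le
  have hA : 0 < e1F μ σ r q b * (gam1 μ σ (r+q) - gam1 μ σ r) :=
    mul_pos (e1F_pos hσ hrq hV) (sub_pos.mpr (gam1_lt_gam1 hσ hr.le (by linarith)))
  rw [← sub_pos, hsplit]
  refine exp_combination_pos_of_le hΓ hA hby ?_
  rw [← hsplit, extP_self hσ hrq, extF_self hσ hrq]
  linarith

end Continuation

theorem stmt17_general (μ σ r q : ℝ) (hμ : 0 < μ) (hσ : 0 < σ) (hr : 0 < r) (hq : 0 < q)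
    (yl : ℝ) :
    ∀ y ∈ Set.Icc yl (yUpper μ σ r q), ∀ b ∈ Set.Icc (bstar μ σ (r+q)) y,
      0 < e3F μ σ r q b y ∧ e4F μ σ r q b y < 0 := by
  rintro y ⟨-, hyu⟩ b ⟨hb, hby⟩
  have hσ0 := hσ.ne'
  have hrq : 0 < r + q := by linarith
  have hV := Vfun_of_bstar_le (μ := μ) hσ0 hrq hb
  have hVpos : 0 < Vfun μ σ (r+q) b := by
    have : 0 < μ / (r + q) := by positivity
    linarith
  have hγV : gam1 μ σ r * Vfun μ σ (r+q) b < 1 :=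
    calc gam1 μ σ r * Vfun μ σ (r+q) b ≤ gam1 μ σ r * (μ / r) := by
          refine mul_le_mul_of_nonneg_left ?_ (gam1_pos hσ0 hr).le
          rw [yUpper] at hyu
          linarith
      _ < 1 := by
          rw [mul_div_assoc', div_lt_one hr, mul_comm]
          exact mul_gam1_lt hσ0 hr
  have hG := extF_pos hσ0 hrq hVpos hby
  have hG' := gam1_mul_extF_lt_extP hσ0 hr hq hVpos hγV hby
  have hγ := gam2_lt_gam1 (μ := μ) hσ0 hr
  have hW := wronskian_pos (μ := μ) hσ0 hr y
  rw [e3F_eq, e4F_eq]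
  constructor
  · exact div_pos (mul_pos (Real.exp_pos _) (by nlinarith)) hW
  · exact div_neg_of_neg_of_pos (neg_neg_of_pos (mul_pos (Real.exp_pos _) (by linarith))) hW

/-- for all `y ∈ [y_l, y_u]` and all `b ∈ [b*_{r+q}, y]`, one has
`e₃(b,y) > 0` and `e₄(b,y) < 0`. -/
theorem stmt17 (μ σ r q : ℝ) (hμ : 0 < μ) (hσ : 0 < σ) (hr : 0 < r) (hq : 0 < q)
    (yl : ℝ) (hyl : yl ∈ Set.Ioo 0 (yUpper μ σ r q)) (hylf : fF μ σ r q yl = 0)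
    (hyluniq : ∀ y ∈ Set.Ioo 0 (yUpper μ σ r q), fF μ σ r q y = 0 → y = yl)
    (hylb : yl ∈ Set.Ioo (bstar μ σ (r+q)) (yUpper μ σ r q)) :
    ∀ y ∈ Set.Icc yl (yUpper μ σ r q), ∀ b ∈ Set.Icc (bstar μ σ (r+q)) y,
      0 < e3F μ σ r q b y ∧ e4F μ σ r q b y < 0 :=
  stmt17_general μ σ r q hμ hσ hr hq yl
end
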